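/- For the Doob-transformed environment ŵ and integers i, b with i ≥ 1, b ≥ 1: V_{θ^b ŵ}(i) = V_ω(i+b) − V_ω(b) + log( S(b+1,ω)·S(b,ω) / (S(i+b+1,ω)·S(i+b,ω)) ). -/
import Mathlib


/-- Potential of an environment `η : ℤ → ℝ`: `V η n = ∑_{i=1}^n log ((1-η i)/η i)`. -/
noncomputable def V (η : ℤ → ℝ) (n : ℕ) : ℝ :=
  ∑ i ∈ Finset.Icc 1 n, Real.log ((1 - η i) / η i)

/-- Lyapunov functional `S η n = ∑_{j=0}^{n-1} exp (V η j)`. -/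
noncomputable def S (η : ℤ → ℝ) (n : ℕ) : ℝ :=
  ∑ j ∈ Finset.range n, Real.exp (V η j)

/-- Shift of the environment: `(θ^m ω)_j = ω_{m+j}`. -/
def shift (m : ℤ) (ω : ℤ → ℝ) : ℤ → ℝ := fun j => ω (m + j)

/-- Doob-transformed environment `ŵ_i = ω_i S(i+1, ω)/S(i, ω)`, meaningful for `i ≥ 1`. -/
noncomputable def hatω (ω : ℤ → ℝ) : ℤ → ℝ := fun i =>
  ω i * S ω (i.toNat + 1) / S ω i.toNat

lemma S_pos (η : ℤ → ℝ) (n : ℕ) (hn : 1 ≤ n) : 0 < S η n := by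
  apply Finset.sum_pos (fun j _ => Real.exp_pos _)
  exact Finset.nonempty_range_iff.2 (by omega)

lemma S_succ (η : ℤ → ℝ) (n : ℕ) : S η (n + 1) = S η n + Real.exp (V η n) :=
  Finset.sum_range_succ _ _

lemma V_succ' (η : ℤ → ℝ) (n m : ℕ) (h : m = n + 1) :
    V η m = V η n + Real.log ((1 - η (m : ℕ)) / η (m : ℕ)) := by
  subst h
  rw [V, V, Finset.sum_Icc_succ_top (by omega : (1:ℕ) ≤ n + 1)]

lemma keyterm (ω : ℤ → ℝ) (hω : ∀ i : ℤ, 0 < ω i ∧ ω i < 1) (m j a d : ℕ)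
    (hj : j = m + 2) (ha : a = m + 1) (hd : d = m + 3) :
    Real.log ((1 - hatω ω (j : ℕ)) / hatω ω (j : ℕ)) =
      Real.log ((1 - ω (j : ℕ)) / ω (j : ℕ)) + Real.log (S ω a) - Real.log (S ω d) := by
  subst hj ha hd
  obtain ⟨h1, h2⟩ := hω ((m + 2 : ℕ) : ℤ)
  set w := ω ((m + 2 : ℕ) : ℤ) with hw
  have hS1 : 0 < S ω (m + 1) := S_pos _ _ (by omega)
  have hS2 : 0 < S ω (m + 2) := S_pos _ _ (by omega)
  have hS3 : 0 < S ω (m + 3) := S_pos _ _ (by omega)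
  have hexp : Real.exp (V ω (m + 2)) = Real.exp (V ω (m + 1)) * ((1 - w) / w) := by
    rw [V_succ' ω (m + 1) (m + 2) rfl, Real.exp_add,
      Real.exp_log (div_pos (by linarith) h1)]
  have key : S ω (m + 2) - w * S ω (m + 3) = (1 - w) * S ω (m + 1) := by
    have e3 : S ω (m + 3) = S ω (m + 2) + Real.exp (V ω (m + 2)) := S_succ ω (m + 2)
    have e2 : S ω (m + 2) = S ω (m + 1) + Real.exp (V ω (m + 1)) := S_succ ω (m + 1)
    rw [e3, hexp, e2]
    field_simp
    ring
  have hhat : hatω ω ((m + 2 : ℕ) : ℤ) = w * S ω (m + 3) / S ω (m + 2) := by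
    simp only [hatω, Int.toNat_natCast, hw]
  have hone : 1 - hatω ω ((m + 2 : ℕ) : ℤ) = (1 - w) * S ω (m + 1) / S ω (m + 2) := by
    rw [hhat, eq_div_iff hS2.ne', sub_mul, one_mul, div_mul_cancel₀ _ hS2.ne']
    linarith [key]
  have hratio : (1 - hatω ω ((m + 2 : ℕ) : ℤ)) / hatω ω ((m + 2 : ℕ) : ℤ) =
      ((1 - w) * S ω (m + 1)) / (w * S ω (m + 3)) := by
    rw [hone, hhat]
    field_simp
  have h1w : (0:ℝ) < 1 - w := by linarith
  rw [hratio, Real.log_div (mul_pos h1w hS1).ne' (mul_pos h1 hS3).ne',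
    Real.log_mul h1w.ne' hS1.ne', Real.log_mul h1.ne' hS3.ne',
    Real.log_div h1w.ne' h1.ne']
  ring

theorem stmt9 (ω : ℤ → ℝ) (hω : ∀ i : ℤ, 0 < ω i ∧ ω i < 1) (i b : ℕ)
    (hi : 1 ≤ i) (hb : 1 ≤ b) :
    V (shift (b : ℤ) (hatω ω)) i =
      V ω (i + b) - V ω b +
        Real.log (S ω (b + 1) * S ω b / (S ω (i + b + 1) * S ω (i + b))) := by
  clear hi
  obtain ⟨c, rfl⟩ : ∃ c, b = c + 1 := ⟨b - 1, by omega⟩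
  induction i with
  | zero =>
      have hS1 : 0 < S ω (c + 1) := S_pos _ _ (by omega)
      have hS2 : 0 < S ω (c + 1 + 1) := S_pos _ _ (by omega)
      simp [V, div_self (mul_pos hS2 hS1).ne']
  | succ n ih =>
      simp only [show n + 1 + (c + 1) = c + n + 2 from by omega,
        show c + n + 2 + 1 = c + n + 3 from by omega,
        show n + (c + 1) = c + n + 1 from by omega,
        show c + n + 1 + 1 = c + n + 2 from by omega,
        show c + 1 + 1 = c + 2 from by omega] at ih ⊢
      rw [V_succ' (shift ((c + 1 : ℕ) : ℤ) (hatω ω)) n (n + 1) rfl]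
      simp only [shift]
      rw [show ((c + 1 : ℕ) : ℤ) + ((n + 1 : ℕ) : ℤ) = ((c + n + 2 : ℕ) : ℤ) by
        push_cast; ring]
      rw [keyterm ω hω (c + n) (c + n + 2) (c + n + 1) (c + n + 3) rfl rfl rfl]
      rw [ih, V_succ' ω (c + n + 1) (c + n + 2) rfl]
      have p1 : 0 < S ω (c + 1) := S_pos _ _ (by omega)
      have p2 : 0 < S ω (c + 2) := S_pos _ _ (by omega)
      have p3 : 0 < S ω (c + n + 1) := S_pos _ _ (by omega)
      have p4 : 0 < S ω (c + n + 2) := S_pos _ _ (by omega)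
      have p5 : 0 < S ω (c + n + 3) := S_pos _ _ (by omega)
      rw [Real.log_div (mul_pos p2 p1).ne' (mul_pos p4 p3).ne',
        Real.log_div (mul_pos p2 p1).ne' (mul_pos p5 p4).ne',
        Real.log_mul p2.ne' p1.ne',
        Real.log_mul p4.ne' p3.ne',
        Real.log_mul p5.ne' p4.ne']
      ring
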